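/- Let α > −1/2 and for x, y, z ∈ ℝ* satisfying ||x|−|y|| < |z| < |x|+|y| define K_ε = ε^{2α+2} K_{α,α}(εx, εy, εz), where K_{α,α}(x,y,z) = 2^{4α+2} M e^{x+y−z} [sinh(x+y+z) sinh(−x+y+z) sinh(x−y+z) sinh(x+y−z)]^{α−1/2} / |sinh 2x sinh 2y sinh 2z|^{2α} · [sinh(x+y+z) sinh(−x+y+z) sinh(x−y+z)] / (sinh 2x sinh 2y sinh 2z), with M = Γ(α+1)/(√π Γ(α+1/2)). Then lim_{ε→0} K_ε = k_α(x,y,z), where k_α(x,y,z) = 2^{−2α−1} M [(x+y+z)(−x+y+z)(x−y+z)(x+y−z)]^{α−1/2} / |xyz|^{2α} · (x+y+z)(−x+y+z)(x−y+z)/(xyz). -/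

import Mathlib

open Filter

noncomputable def Malpha (α : ℝ) : ℝ :=
  Real.Gamma (α + 1) / (Real.sqrt Real.pi * Real.Gamma (α + 1/2))

noncomputable def Kaa (α x y z : ℝ) : ℝ :=
  (2 : ℝ) ^ (4 * α + 2) * Malpha α * Real.exp (x + y - z) *
    (Real.sinh (x + y + z) * Real.sinh (-x + y + z) * Real.sinh (x - y + z) *
        Real.sinh (x + y - z)) ^ (α - 1/2) /
      |Real.sinh (2 * x) * Real.sinh (2 * y) * Real.sinh (2 * z)| ^ (2 * α) *
    (Real.sinh (x + y + z) * Real.sinh (-x + y + z) * Real.sinh (x - y + z) /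
      (Real.sinh (2 * x) * Real.sinh (2 * y) * Real.sinh (2 * z)))

noncomputable def kRat (α x y z : ℝ) : ℝ :=
  (2 : ℝ) ^ (-2 * α - 1) * Malpha α *
    ((x + y + z) * (-x + y + z) * (x - y + z) * (x + y - z)) ^ (α - 1/2) /
      |x * y * z| ^ (2 * α) *
    ((x + y + z) * (-x + y + z) * (x - y + z) / (x * y * z))

/-!
Since `sinh (ε * u) = ε * (sinh (ε * u) / ε)` and the kernel is homogeneous of degree
`-(2α + 2)` in the values of `sinh`, the rescaled kernel
`ε ^ (2α + 2) * Kaa α (ε x) (ε y) (ε z)` is the same expression with `sinh` replaced by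
`u ↦ sinh (ε u) / ε`, which tends to the identity.
The expression is continuous at the limit because the triangle condition makes
`(x+y+z)(-x+y+z)(x-y+z)(x+y-z)` positive; the factors `2` in `sinh (2x) ≈ 2x` turn the constant
`2 ^ (4α + 2)` into `2 ^ (-2α - 1)`.
-/

open Real Topology

noncomputable def kernelProfile (α P R Q : ℝ) : ℝ :=
  P ^ (α - 1/2) / |Q| ^ (2 * α) * (R / Q)

/-- Up to constants and the factor `exp (x + y - z)`, `Kaa` is `triangleKernel α sinh` and
`kRat` is `triangleKernel α id`. -/
noncomputable def triangleKernel (α : ℝ) (f : ℝ → ℝ) (x y z : ℝ) : ℝ :=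
  kernelProfile α (f (x + y + z) * f (-x + y + z) * f (x - y + z) * f (x + y - z))
    (f (x + y + z) * f (-x + y + z) * f (x - y + z)) (f (2 * x) * f (2 * y) * f (2 * z))

lemma kernelProfile_homogeneous {t P : ℝ} (α R Q : ℝ) (ht : 0 < t) (hP : 0 ≤ P) :
    t ^ (2 * α + 2) * kernelProfile α (t ^ 4 * P) (t ^ 3 * R) (t ^ 3 * Q) =
      kernelProfile α P R Q := by
  have hP4 : (t ^ 4 * P) ^ (α - 1/2) = t ^ (4 * α - 2) * P ^ (α - 1/2) := by
    rw [mul_rpow (by positivity) hP, ← rpow_natCast, ← rpow_mul ht.le]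
    ring_nf
  have hQ3 : |t ^ 3 * Q| ^ (2 * α) = t ^ (6 * α) * |Q| ^ (2 * α) := by
    rw [abs_mul, abs_of_pos (by positivity), mul_rpow (by positivity) (abs_nonneg Q),
      ← rpow_natCast, ← rpow_mul ht.le]
    ring_nf
  have hexp : t ^ (2 * α + 2) * t ^ (4 * α - 2) = t ^ (6 * α) := by
    rw [← rpow_add ht]
    ring_nf
  have ht6 : t ^ (6 * α) ≠ 0 := (rpow_pos_of_pos ht _).ne'
  unfold kernelProfile
  rw [hP4, hQ3, mul_div_mul_left R Q (pow_ne_zero 3 ht.ne'), ← hexp]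
  field_simp

lemma kernelProfile_mul_right {c : ℝ} (α P R Q : ℝ) (hc : 0 < c) :
    kernelProfile α P R (c * Q) = c ^ (-(2 * α + 1)) * kernelProfile α P R Q := by
  have hc' : c ^ (2 * α) ≠ 0 := (rpow_pos_of_pos hc _).ne'
  unfold kernelProfile
  rw [abs_mul, abs_of_pos hc, mul_rpow hc.le (abs_nonneg Q), neg_add, rpow_add hc, rpow_neg_one,
    rpow_neg hc.le]
  field_simp

lemma triangleKernel_comp_mul (α : ℝ) (f : ℝ → ℝ) (ε x y z : ℝ) :
    triangleKernel α f (ε * x) (ε * y) (ε * z) =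
      triangleKernel α (fun u => f (ε * u)) x y z := by
  simp only [triangleKernel, mul_add, mul_sub, mul_neg, mul_left_comm ε 2]

lemma triangleKernel_const_mul {t : ℝ} (α : ℝ) (g : ℝ → ℝ) (x y z : ℝ) (ht : 0 < t)
    (hg : 0 ≤ g (x + y + z) * g (-x + y + z) * g (x - y + z) * g (x + y - z)) :
    t ^ (2 * α + 2) * triangleKernel α (fun u => t * g u) x y z = triangleKernel α g x y z := by
  rw [triangleKernel, triangleKernel, ← kernelProfile_homogeneous α _ _ ht hg]
  congr 2 <;> ring

lemma kRat_eq_triangleKernel (α x y z : ℝ) :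
    kRat α x y z = 2 ^ (4 * α + 2) * Malpha α * triangleKernel α id x y z := by
  have h8 : (8 : ℝ) ^ (-(2 * α + 1)) = 2 ^ (-(6 * α + 3)) := by
    rw [show (8 : ℝ) = 2 ^ (3 : ℝ) by norm_num, ← rpow_mul (by norm_num)]
    ring_nf
  have h2 : (2 : ℝ) ^ (4 * α + 2) * 2 ^ (-(6 * α + 3)) = 2 ^ (-2 * α - 1) := by
    rw [← rpow_add (by norm_num)]
    ring_nf
  simp only [triangleKernel, id]
  rw [show 2 * x * (2 * y) * (2 * z) = 8 * (x * y * z) by ring,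
    kernelProfile_mul_right _ _ _ _ (by norm_num), h8, ← mul_assoc, mul_right_comm _ (Malpha α),
    h2, kRat, kernelProfile]
  ring

lemma Kaa_eq_triangleKernel (α x y z : ℝ) :
    Kaa α x y z =
      2 ^ (4 * α + 2) * Malpha α * exp (x + y - z) * triangleKernel α sinh x y z := by
  simp only [Kaa, triangleKernel, kernelProfile]
  ring

lemma tendsto_triangleKernel {ι : Type*} {l : Filter ι} {g : ι → ℝ → ℝ} {f : ℝ → ℝ}
    (α x y z : ℝ) (hg : ∀ u, Tendsto (fun i => g i u) l (𝓝 (f u)))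
    (hP : f (x + y + z) * f (-x + y + z) * f (x - y + z) * f (x + y - z) ≠ 0)
    (hQ : f (2 * x) * f (2 * y) * f (2 * z) ≠ 0) :
    Tendsto (fun i => triangleKernel α (g i) x y z) l (𝓝 (triangleKernel α f x y z)) := by
  have hR := ((hg (x + y + z)).mul (hg (-x + y + z))).mul (hg (x - y + z))
  have hD := ((hg (2 * x)).mul (hg (2 * y))).mul (hg (2 * z))
  have hD' : |f (2 * x) * f (2 * y) * f (2 * z)| ^ (2 * α) ≠ 0 :=
    (rpow_pos_of_pos (abs_pos.mpr hQ) _).ne'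
  exact (((hR.mul (hg (x + y - z))).rpow_const (Or.inl hP)).div
    (hD.abs.rpow_const (Or.inl (abs_ne_zero.mpr hQ))) hD').mul (hR.div hD hQ)

lemma tendsto_sinh_mul_div (c : ℝ) :
    Tendsto (fun ε => sinh (ε * c) / ε) (𝓝[≠] 0) (𝓝 c) := by
  have h : HasDerivAt (fun t => sinh (t * c)) c 0 := by
    simpa using ((hasDerivAt_id 0).mul_const c).sinh
  refine (hasDerivAt_iff_tendsto_slope.mp h).congr fun ε => ?_
  simp [slope_def_field]

lemma triangle_prod_pos {x y z : ℝ} (h1 : |(|x| - |y|)| < |z|) (h2 : |z| < |x| + |y|) :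
    0 < (x + y + z) * (-x + y + z) * (x - y + z) * (x + y - z) := by
  have hlt : z ^ 2 < (|x| + |y|) ^ 2 := by
    simpa only [sq_abs] using pow_lt_pow_left₀ h2 (abs_nonneg z) two_ne_zero
  have hgt : (|x| - |y|) ^ 2 < z ^ 2 := by
    simpa only [sq_abs] using pow_lt_pow_left₀ h1 (abs_nonneg _) two_ne_zero
  calc 0 < ((|x| + |y|) ^ 2 - z ^ 2) * (z ^ 2 - (|x| - |y|) ^ 2) :=
        mul_pos (by linarith) (by linarith)
    _ = 4 * |x| ^ 2 * |y| ^ 2 - (|x| ^ 2 + |y| ^ 2 - z ^ 2) ^ 2 := by ring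
    _ = _ := by simp only [sq_abs]; ring

theorem kernel_rational_limit_general (α x y z : ℝ)
    (hx : x ≠ 0) (hy : y ≠ 0) (hz : z ≠ 0)
    (h1 : abs (|x| - |y|) < |z|) (h2 : |z| < |x| + |y|) :
    Tendsto (fun ε : ℝ => ε ^ (2 * α + 2) * Kaa α (ε * x) (ε * y) (ε * z))
      (nhdsWithin 0 (Set.Ioi 0)) (nhds (kRat α x y z)) := by
  set g : ℝ → ℝ → ℝ := fun ε u => sinh (ε * u) / ε
  have hg : ∀ u, Tendsto (fun ε => g ε u) (𝓝[>] 0) (𝓝 u) := fun u =>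
    (tendsto_sinh_mul_div u).mono_left (nhdsWithin_mono _ fun _ h => ne_of_gt h)
  have hP := triangle_prod_pos h1 h2
  have hK := tendsto_triangleKernel (f := id) α x y z hg hP.ne' (by simp [hx, hy, hz])
  have hE : Tendsto (fun ε => exp (ε * x + ε * y - ε * z)) (𝓝[>] 0) (𝓝 1) := by
    have hc : Continuous fun ε => exp (ε * x + ε * y - ε * z) := by fun_prop
    simpa using (hc.tendsto 0).mono_left nhdsWithin_le_nhds
  have hg_nonneg : ∀ᶠ ε in 𝓝[>] 0,
      0 ≤ g ε (x + y + z) * g ε (-x + y + z) * g ε (x - y + z) * g ε (x + y - z) :=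
    (((((hg _).mul (hg _)).mul (hg _)).mul (hg _)).eventually (lt_mem_nhds hP)).mono
      fun _ => le_of_lt
  rw [kRat_eq_triangleKernel, ← mul_one (2 ^ (4 * α + 2) * Malpha α)]
  refine ((tendsto_const_nhds.mul hE).mul hK).congr' ?_
  filter_upwards [self_mem_nhdsWithin, hg_nonneg] with ε (hε : 0 < ε) hgε
  have hsinh : (fun u => sinh (ε * u)) = fun u => ε * g ε u := by
    funext u; exact (mul_div_cancel₀ _ hε.ne').symm
  rw [Kaa_eq_triangleKernel, triangleKernel_comp_mul, hsinh, mul_left_comm,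
    triangleKernel_const_mul α _ x y z hε hgε]

theorem kernel_rational_limit (α x y z : ℝ) (hα : α > -(1/2))
    (hx : x ≠ 0) (hy : y ≠ 0) (hz : z ≠ 0)
    (h1 : abs (|x| - |y|) < |z|) (h2 : |z| < |x| + |y|) :
    Tendsto (fun ε : ℝ => ε ^ (2 * α + 2) * Kaa α (ε * x) (ε * y) (ε * z))
      (nhdsWithin 0 (Set.Ioi 0)) (nhds (kRat α x y z)) :=
  kernel_rational_limit_general α x y z hx hy hz h1 h2
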